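/- arXiv:1904.06550 — 2 statements merged into one kernel-verified Lean document; each statement's English description precedes it below -/
import Mathlib

section
/- Let φ and ψ be complementary Orlicz functions (ψ(u) = sup{uv − φ(v) : v ≥ 0}). If x and y are compact operators on a separable Hilbert space with ∑ₙ φ(sₙ(x)) < ∞ and ∑ₙ ψ(sₙ(y)) < ∞, then xy is trace class, i.e. ∑ₙ sₙ(xy) < ∞. -/
open scoped ENNReal
open Filter

/-- An Orlicz function: convex, nondecreasing and continuous on `[0, ∞)`,
vanishing at `0`, positive on `(0, ∞)` and tending to `∞` at `∞`. -/
def IsOrlicz (φ : ℝ → ℝ) : Prop :=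
  ConvexOn ℝ (Set.Ici 0) φ ∧ MonotoneOn φ (Set.Ici 0) ∧
  ContinuousOn φ (Set.Ici 0) ∧ φ 0 = 0 ∧ (∀ t : ℝ, 0 < t → 0 < φ t) ∧
  Tendsto φ atTop atTop

/-- The δ₂ condition near zero. -/
def Delta2 (φ : ℝ → ℝ) : Prop :=
  ∃ u₀ > (0:ℝ), ∃ k > (2:ℝ), ∀ u : ℝ, 0 ≤ u → u ≤ u₀ → φ (2 * u) ≤ k * φ u

/-- The Orlicz modular of a sequence: `∑ₙ φ(sₙ)` (as an extended real). -/
noncomputable def modular (φ : ℝ → ℝ) (s : ℕ → ℝ) : ℝ≥0∞ :=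
  ∑' n, ENNReal.ofReal (φ (s n))

/-- The Luxemburg norm of a sequence. -/
noncomputable def lux (φ : ℝ → ℝ) (s : ℕ → ℝ) : ℝ :=
  sInf {l : ℝ | 0 < l ∧ modular φ (fun n => s n / l) ≤ 1}

variable {H : Type*} [NormedAddCommGroup H] [InnerProductSpace ℂ H] [CompleteSpace H]
  [TopologicalSpace.SeparableSpace H]

/-- The `n`-th singular value of a bounded operator on a Hilbert space, defined as the
`n`-th approximation number `sₙ(x) = inf {‖x - F‖ : rank F ≤ n}` (for compact operators
this is the decreasingly ordered sequence of eigenvalues of `|x|`). -/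
noncomputable def sv (x : H →L[ℂ] H) (n : ℕ) : ℝ :=
  sInf {c : ℝ | ∃ F : H →L[ℂ] H, FiniteDimensional ℂ (LinearMap.range F.toLinearMap) ∧
    Module.finrank ℂ (LinearMap.range F.toLinearMap) ≤ n ∧ c = ‖x - F‖}

section Aux

set_option linter.unusedSectionVars false

lemma aux_le_sInf_mul {S T : Set ℝ} (hS : S.Nonempty) (hT : T.Nonempty)
    (hS0 : ∀ a ∈ S, 0 ≤ a) (hT0 : ∀ b ∈ T, 0 ≤ b) {t : ℝ}
    (h : ∀ a ∈ S, ∀ b ∈ T, t ≤ a * b) : t ≤ sInf S * sInf T := by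
  have hstep : ∀ b ∈ T, t ≤ sInf S * b := by
    intro b hb
    rcases eq_or_lt_of_le (hT0 b hb) with hb0 | hb0
    · obtain ⟨a, ha⟩ := hS
      have := h a ha b hb
      rw [← hb0] at this ⊢
      simpa using this
    · have h1 : t / b ≤ sInf S :=
        le_csInf hS fun a ha => (div_le_iff₀ hb0).2 (h a ha b hb)
      calc t = t / b * b := by field_simp
        _ ≤ sInf S * b := by nlinarith
  have hS' : 0 ≤ sInf S := Real.sInf_nonneg hS0
  rcases eq_or_lt_of_le hS' with h0 | h0
  · obtain ⟨b, hb⟩ := hT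
    have := hstep b hb
    rw [← h0] at this ⊢
    simpa using this
  · have h1 : t / sInf S ≤ sInf T :=
      le_csInf hT fun b hb => (div_le_iff₀ h0).2 (by rw [mul_comm]; exact hstep b hb)
    calc t = t / sInf S * sInf S := by field_simp
      _ ≤ sInf T * sInf S := by nlinarith
      _ = sInf S * sInf T := mul_comm _ _

lemma svSet_nonempty (x : H →L[ℂ] H) (n : ℕ) :
    {c : ℝ | ∃ F : H →L[ℂ] H, FiniteDimensional ℂ (LinearMap.range F.toLinearMap) ∧
      Module.finrank ℂ (LinearMap.range F.toLinearMap) ≤ n ∧ c = ‖x - F‖}.Nonempty := by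
  have h0 : LinearMap.range (0 : H →L[ℂ] H).toLinearMap = ⊥ := by
    simp
  refine ⟨‖x - 0‖, 0, ?_, ?_, rfl⟩
  · rw [h0]; infer_instance
  · rw [h0]; simp

lemma svSet_bddBelow (x : H →L[ℂ] H) (n : ℕ) :
    BddBelow {c : ℝ | ∃ F : H →L[ℂ] H, FiniteDimensional ℂ (LinearMap.range F.toLinearMap) ∧
      Module.finrank ℂ (LinearMap.range F.toLinearMap) ≤ n ∧ c = ‖x - F‖} :=
  ⟨0, by rintro c ⟨F, -, -, rfl⟩; exact norm_nonneg _⟩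

lemma sv_nonneg (x : H →L[ℂ] H) (n : ℕ) : 0 ≤ sv x n :=
  Real.sInf_nonneg (by rintro c ⟨F, -, -, rfl⟩; exact norm_nonneg _)

lemma sv_le (x : H →L[ℂ] H) (n : ℕ) (F : H →L[ℂ] H)
    (h1 : FiniteDimensional ℂ (LinearMap.range F.toLinearMap))
    (h2 : Module.finrank ℂ (LinearMap.range F.toLinearMap) ≤ n) : sv x n ≤ ‖x - F‖ :=
  csInf_le (svSet_bddBelow x n) ⟨F, h1, h2, rfl⟩

lemma sv_antitone (x : H →L[ℂ] H) : Antitone (sv x) := by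
  intro n m h
  exact csInf_le_csInf (svSet_bddBelow x m) (svSet_nonempty x n)
    (by rintro c ⟨F, h1, h2, rfl⟩; exact ⟨F, h1, h2.trans h, rfl⟩)

/-- Horn's singular value inequality for approximation numbers:
`s_{n+m}(xy) ≤ sₙ(x) · sₘ(y)`. -/
lemma sv_mul (x y : H →L[ℂ] H) (n m : ℕ) :
    sv (x * y) (n + m) ≤ sv x n * sv y m := by
  apply aux_le_sInf_mul (svSet_nonempty x n) (svSet_nonempty y m)
    (by rintro c ⟨F, -, -, rfl⟩; exact norm_nonneg _)
    (by rintro c ⟨F, -, -, rfl⟩; exact norm_nonneg _)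
  rintro a ⟨F, hF1, hF2, rfl⟩ b ⟨G, hG1, hG2, rfl⟩
  set D : H →L[ℂ] H := F * y + (x - F) * G with hD
  set R1 := LinearMap.range F.toLinearMap
  set R2 := Submodule.map (x - F).toLinearMap (LinearMap.range G.toLinearMap)
  haveI : FiniteDimensional ℂ R1 := hF1
  haveI : FiniteDimensional ℂ (LinearMap.range G.toLinearMap) := hG1
  haveI : FiniteDimensional ℂ R2 := Module.Finite.map _ _
  have hrange : LinearMap.range D.toLinearMap ≤ R1 ⊔ R2 := by
    rintro - ⟨v, rfl⟩
    have : D.toLinearMap v = F (y v) + (x - F) (G v) := by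
      simp [hD, ContinuousLinearMap.mul_apply]
    rw [this]
    exact Submodule.add_mem_sup ⟨y v, rfl⟩ ⟨G v, ⟨v, rfl⟩, rfl⟩
  haveI : FiniteDimensional ℂ (LinearMap.range D.toLinearMap) :=
    Submodule.finiteDimensional_of_le hrange
  have hrank : Module.finrank ℂ (LinearMap.range D.toLinearMap) ≤ n + m := by
    calc Module.finrank ℂ (LinearMap.range D.toLinearMap)
        ≤ Module.finrank ℂ ↥(R1 ⊔ R2) := Submodule.finrank_mono hrange
      _ ≤ Module.finrank ℂ R1 + Module.finrank ℂ R2 :=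
          Submodule.finrank_add_le_finrank_add_finrank R1 R2
      _ ≤ n + m := by
          have := Submodule.finrank_map_le (x - F).toLinearMap (LinearMap.range G.toLinearMap)
          exact add_le_add hF2 (this.trans hG2)
  have hkey : x * y - D = (x - F) * (y - G) := by rw [hD]; noncomm_ring
  calc sv (x * y) (n + m) ≤ ‖x * y - D‖ := sv_le _ _ D inferInstance hrank
    _ = ‖(x - F) * (y - G)‖ := by rw [hkey]
    _ ≤ ‖x - F‖ * ‖y - G‖ := norm_mul_le _ _

lemma orlicz_nonneg {φ : ℝ → ℝ} (hφ : IsOrlicz φ) {w : ℝ} (hw : 0 ≤ w) : 0 ≤ φ w := by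
  have := hφ.2.1 (Set.self_mem_Ici) (Set.mem_Ici.2 hw) hw
  rw [hφ.2.2.2.1] at this; exact this

lemma orlicz_slope {φ : ℝ → ℝ} (hφ : IsOrlicz φ) {w : ℝ} (hw : 1 ≤ w) :
    w * φ 1 ≤ φ w := by
  have hw0 : 0 < w := lt_of_lt_of_le one_pos hw
  have ha : (0:ℝ) ≤ 1/w := by positivity
  have hb : (0:ℝ) ≤ 1 - 1/w := by
    rw [sub_nonneg]; exact div_le_one_of_le₀ hw (by positivity)
  have hab : 1/w + (1 - 1/w) = (1:ℝ) := by ring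
  have h := hφ.1.2 (Set.mem_Ici.2 hw0.le) (Set.self_mem_Ici (a := (0:ℝ))) ha hb hab
  have h1 : (1/w) • w + (1 - 1/w) • (0:ℝ) = 1 := by simp only [smul_eq_mul]; field_simp; ring
  rw [h1, hφ.2.2.2.1] at h
  have : φ 1 ≤ φ w / w := by
    simpa [smul_eq_mul, div_eq_mul_inv, mul_comm] using h
  calc w * φ 1 ≤ w * (φ w / w) := by nlinarith
    _ = φ w := by field_simp

/-- Young's inequality `u·v ≤ φ(u) + ψ(v)` for the complementary function,
valid as soon as `v ≤ φ(1)` (which guarantees the defining supremum is honest). -/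
lemma orlicz_young {φ : ℝ → ℝ} (hφ : IsOrlicz φ) {u v : ℝ} (hu : 0 ≤ u) (hv : 0 ≤ v)
    (hv1 : v ≤ φ 1) :
    u * v ≤ φ u + sSup {t : ℝ | ∃ w : ℝ, 0 ≤ w ∧ t = v * w - φ w} := by
  have hbdd : ∀ t ∈ {t : ℝ | ∃ w : ℝ, 0 ≤ w ∧ t = v * w - φ w}, t ≤ v := by
    rintro t ⟨w, hw, rfl⟩
    rcases le_or_gt w 1 with h1 | h1
    · have := orlicz_nonneg hφ hw
      nlinarith
    · have := orlicz_slope hφ h1.le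
      nlinarith
  have hmem : u * v - φ u ∈ {t : ℝ | ∃ w : ℝ, 0 ≤ w ∧ t = v * w - φ w} :=
    ⟨u, hu, by ring⟩
  have := le_csSup ⟨v, hbdd⟩ hmem
  linarith

/-- A compact operator has arbitrarily small approximation numbers. -/
lemma sv_small (y : H →L[ℂ] H) (hy : IsCompactOperator ⇑y) {ε : ℝ} (hε : 0 < ε) :
    ∃ N : ℕ, sv y N ≤ ε := by
  have hK : IsCompact (closure (⇑y '' Metric.closedBall 0 1)) := by
    exact IsCompactOperator.isCompact_closure_image_closedBall
      (f := (y.toLinearMap : H →ₗ[ℂ] H)) hy 1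
  obtain ⟨t, htf, hcover⟩ := Metric.totallyBounded_iff.1 hK.totallyBounded ε hε
  set V : Submodule ℂ H := Submodule.span ℂ t with hV
  haveI : FiniteDimensional ℂ V := FiniteDimensional.span_of_finite ℂ htf
  haveI : CompleteSpace V := FiniteDimensional.complete ℂ V
  set P : H →L[ℂ] V := V.orthogonalProjectionOnto with hP
  set F : H →L[ℂ] H := (V.subtypeL.comp P).comp y with hF
  have hFapp : ∀ v : H, F v = (P (y v) : H) := fun v => rfl
  have hrange : LinearMap.range F.toLinearMap ≤ V := by
    rintro - ⟨v, rfl⟩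
    show F v ∈ V
    rw [hFapp]
    exact (P (y v)).2
  haveI : FiniteDimensional ℂ (LinearMap.range F.toLinearMap) :=
    Submodule.finiteDimensional_of_le hrange
  refine ⟨htf.toFinset.card, le_trans (sv_le y _ F inferInstance ?_) ?_⟩
  · calc Module.finrank ℂ (LinearMap.range F.toLinearMap)
        ≤ Module.finrank ℂ V := Submodule.finrank_mono hrange
      _ ≤ htf.toFinset.card := by
          have : V = Submodule.span ℂ (htf.toFinset : Set H) := by
            rw [hV, Set.Finite.coe_toFinset]
          rw [this]
          exact finrank_span_finset_le_card htf.toFinset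
  · -- `‖y - F‖ ≤ ε`
    apply ContinuousLinearMap.opNorm_le_bound _ hε.le
    intro v
    rcases eq_or_ne v 0 with rfl | hv
    · simp
    · have hnv : (0:ℝ) < ‖v‖ := norm_pos_iff.2 hv
      set c : ℂ := (‖v‖ : ℂ) with hc
      have hc0 : c ≠ 0 := by
        rw [hc]
        exact_mod_cast hnv.ne'
      set u : H := c⁻¹ • v with hu
      have hnu : ‖u‖ = 1 := by
        rw [hu, norm_smul, norm_inv, hc]
        simp [Complex.norm_real, abs_of_nonneg hnv.le]
        field_simp
      have humem : u ∈ Metric.closedBall (0:H) 1 := by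
        simp [Metric.mem_closedBall, hnu]
      have hyu : y u ∈ ⋃ z ∈ t, Metric.ball z ε :=
        hcover (subset_closure ⟨u, humem, rfl⟩)
      obtain ⟨z, hz, hdz⟩ := Set.mem_iUnion₂.1 hyu
      have hzV : z ∈ V := Submodule.subset_span hz
      have hmin : ‖y u - F u‖ ≤ ‖y u - z‖ := by
        rw [hFapp]
        rw [show y u - (P (y u) : H) = y u - (V.orthogonalProjectionOnto (y u) : H) from rfl]
        rw [← Submodule.starProjection_apply, Submodule.starProjection_minimal]
        exact ciInf_le ⟨0, by rintro - ⟨w, rfl⟩; exact norm_nonneg _⟩ (⟨z, hzV⟩ : V)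
      have hstep : ‖(y - F) u‖ ≤ ε := by
        have : ‖y u - z‖ < ε := by
          rw [← dist_eq_norm]; exact Metric.mem_ball.1 hdz
        calc ‖(y - F) u‖ = ‖y u - F u‖ := by simp
          _ ≤ ‖y u - z‖ := hmin
          _ ≤ ε := this.le
      have hvcu : v = c • u := by
        rw [hu, smul_smul, mul_inv_cancel₀ hc0, one_smul]
      calc ‖(y - F) v‖ = ‖(y - F) (c • u)‖ := by rw [← hvcu]
        _ = ‖c‖ * ‖(y - F) u‖ := by rw [map_smul, norm_smul]
        _ ≤ ‖c‖ * ε := by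
            have : (0:ℝ) ≤ ‖c‖ := norm_nonneg _
            nlinarith
        _ = ε * ‖v‖ := by
            rw [hc]
            simp [Complex.norm_real, abs_of_nonneg hnv.le, mul_comm]

end Aux

/-- If `φ, ψ` are complementary Orlicz functions and `∑ₙ φ(sₙ(x)) < ∞`,
`∑ₙ ψ(sₙ(y)) < ∞` for compact operators `x, y`, then `xy` is trace class. -/
theorem stmt_5 (φ ψ : ℝ → ℝ) (hφ : IsOrlicz φ)
    (hψ : ∀ u : ℝ, 0 ≤ u → ψ u = sSup {t : ℝ | ∃ v : ℝ, 0 ≤ v ∧ t = u * v - φ v})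
    (x y : H →L[ℂ] H) (hx : IsCompactOperator ⇑x) (hy : IsCompactOperator ⇑y)
    (hxφ : modular φ (sv x) < ⊤) (hyψ : modular ψ (sv y) < ⊤) :
    (∑' n, ENNReal.ofReal (sv (x * y) n)) < ⊤ := by
  have hφ1 : 0 < φ 1 := hφ.2.2.2.2.1 1 one_pos
  obtain ⟨N, hN⟩ := sv_small y hy hφ1
  have hNall : ∀ k : ℕ, N ≤ k → sv y k ≤ φ 1 :=
    fun k hk => (sv_antitone y hk).trans hN
  set f : ℕ → ℝ≥0∞ := fun n => ENNReal.ofReal (sv (x * y) n) with hf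
  have hkey : ∀ k : ℕ, N ≤ k → f (2 * k) ≤
      ENNReal.ofReal (φ (sv x k)) + ENNReal.ofReal (ψ (sv y k)) := by
    intro k hk
    have h1 : sv (x * y) (2 * k) ≤ sv x k * sv y k := by
      rw [two_mul]; exact sv_mul x y _ _
    have h2 : sv x k * sv y k ≤ φ (sv x k) + ψ (sv y k) := by
      rw [hψ _ (sv_nonneg y _)]
      exact orlicz_young hφ (sv_nonneg x _) (sv_nonneg y _) (hNall k hk)
    calc f (2 * k) ≤ ENNReal.ofReal (φ (sv x k) + ψ (sv y k)) :=
        ENNReal.ofReal_le_ofReal (h1.trans h2)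
      _ ≤ _ := ENNReal.ofReal_add_le
  have hbound : ∀ k : ℕ, f (2 * k) ≤
      (ENNReal.ofReal (φ (sv x k)) + ENNReal.ofReal (ψ (sv y k))) +
        (if k < N then f 0 else 0) := by
    intro k
    by_cases hk : k < N
    · rw [if_pos hk]
      have : f (2 * k) ≤ f 0 :=
        ENNReal.ofReal_le_ofReal (sv_antitone _ (Nat.zero_le _))
      exact le_trans this le_add_self
    · rw [if_neg hk]
      push_neg at hk
      simpa using hkey k hk
  have hite : (∑' k : ℕ, (if k < N then f 0 else 0)) < ⊤ := by
    have heq : (∑' k : ℕ, (if k < N then f 0 else 0)) =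
        ∑ k ∈ Finset.range N, (if k < N then f 0 else 0) := by
      apply tsum_eq_sum
      intro b hb
      rw [if_neg]
      simpa using hb
    rw [heq]
    refine ENNReal.sum_lt_top.2 fun a _ => ?_
    split <;> simp [hf]
  have heven : (∑' k : ℕ, f (2 * k)) < ⊤ := by
    calc (∑' k : ℕ, f (2 * k))
        ≤ ∑' k : ℕ, ((ENNReal.ofReal (φ (sv x k)) + ENNReal.ofReal (ψ (sv y k))) +
            (if k < N then f 0 else 0)) := ENNReal.tsum_le_tsum hbound
      _ = ((∑' k : ℕ, ENNReal.ofReal (φ (sv x k))) +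
            ∑' k : ℕ, ENNReal.ofReal (ψ (sv y k))) +
            ∑' k : ℕ, (if k < N then f 0 else 0) := by
          rw [ENNReal.tsum_add, ENNReal.tsum_add]
      _ < ⊤ := by
          refine ENNReal.add_lt_top.2 ⟨ENNReal.add_lt_top.2 ⟨hxφ, hyψ⟩, hite⟩
  have hodd : (∑' k : ℕ, f (2 * k + 1)) ≤ ∑' k : ℕ, f (2 * k) :=
    ENNReal.tsum_le_tsum fun k =>
      ENNReal.ofReal_le_ofReal (sv_antitone _ (by omega))
  calc (∑' n, f n) = (∑' k : ℕ, f (2 * k)) + ∑' k : ℕ, f (2 * k + 1) :=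
      (tsum_even_add_odd ENNReal.summable ENNReal.summable).symm
    _ ≤ (∑' k : ℕ, f (2 * k)) + ∑' k : ℕ, f (2 * k) := add_le_add le_rfl hodd
    _ < ⊤ := ENNReal.add_lt_top.2 ⟨heven, heven⟩
end

section
/- Let φ ∈ δ₂(0) be an Orlicz function and (xₘ) a sequence of compact operators whose singular value sequences are uniformly bounded. Then ∑ₙ φ(sₙ(xₘ)) → 0 as m → ∞ if and only if ‖xₘ‖_φ → 0, where ‖·‖_φ is the Luxemburg norm. -/
open scoped ENNReal
open Filter

variable {H : Type*} [NormedAddCommGroup H] [InnerProductSpace ℂ H] [CompleteSpace H]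
  [TopologicalSpace.SeparableSpace H]

/-- The Luxemburg norm, valued in `ℝ≥0∞`. -/
noncomputable def eLux (φ : ℝ → ℝ) (s : ℕ → ℝ) : ℝ≥0∞ :=
  ⨅ (l : ℝ) (_ : 0 < l) (_ : modular φ (fun n => s n / l) ≤ 1), ENNReal.ofReal l

/-- Iterated δ₂ estimate. -/
lemma delta2_iter {φ : ℝ → ℝ} {u₀ k : ℝ} (hk : 0 ≤ k)
    (h : ∀ u : ℝ, 0 ≤ u → u ≤ u₀ → φ (2 * u) ≤ k * φ u) (j : ℕ) :
    ∀ u : ℝ, 0 ≤ u → u ≤ u₀ / 2 ^ j → φ (2 ^ j * u) ≤ k ^ j * φ u := by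
  induction j with
  | zero => intro u hu _; simp
  | succ j ih =>
      intro u hu hu'
      have hp : (0:ℝ) < 2 ^ j := by positivity
      have hs : (2:ℝ) ^ (j + 1) = 2 * 2 ^ j := by ring
      rw [le_div_iff₀ (by positivity)] at hu'
      have hle : 2 ^ j * u ≤ u₀ := by nlinarith
      have hu'' : u ≤ u₀ / 2 ^ j := by rw [le_div_iff₀ hp]; nlinarith
      calc φ (2 ^ (j + 1) * u) = φ (2 * (2 ^ j * u)) := by ring_nf
        _ ≤ k * φ (2 ^ j * u) := h _ (by positivity) hle
        _ ≤ k * (k ^ j * φ u) := mul_le_mul_of_nonneg_left (ih u hu hu'') hk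
        _ = k ^ (j + 1) * φ u := by ring

/-- For `φ ∈ δ₂(0)` and compact operators `xₘ` with uniformly bounded singular
values, modular convergence `∑ₙ φ(sₙ(xₘ)) → 0` is equivalent to norm convergence
`‖xₘ‖_φ → 0`. -/
theorem stmt_19 (φ : ℝ → ℝ) (hφ : IsOrlicz φ) (hδ : Delta2 φ)
    (x : ℕ → (H →L[ℂ] H)) (hx : ∀ m, IsCompactOperator ⇑(x m))
    (C : ℝ) (hC : ∀ m n, sv (x m) n ≤ C) :
    Tendsto (fun m => modular φ (sv (x m))) atTop (nhds 0) ↔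
      Tendsto (fun m => eLux φ (sv (x m))) atTop (nhds 0) := by
  obtain ⟨hconv, hmono, _, hzero, hpos, _⟩ := hφ
  obtain ⟨u₀, hu₀, k, hk2, hδ2⟩ := hδ
  have hk0 : (0:ℝ) < k := by linarith
  have hφnn : ∀ t : ℝ, 0 ≤ t → 0 ≤ φ t := fun t ht => by
    have := hmono (Set.self_mem_Ici) (ht : t ∈ Set.Ici (0:ℝ)) ht
    rwa [hzero] at this
  constructor
  · -- modular → 0 implies eLux → 0
    intro hmod
    rw [ENNReal.tendsto_atTop_zero]
    intro ε hε
    obtain ⟨j, hj⟩ := ENNReal.exists_inv_two_pow_lt hε.ne'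
    set δ : ℝ := u₀ / 2 ^ j with hδdef
    have hδpos : 0 < δ := by positivity
    have hφδ : 0 < φ δ := hpos δ hδpos
    have hkj : (0:ℝ) < k ^ j := by positivity
    set c : ℝ≥0∞ := min (ENNReal.ofReal (1 / k ^ j)) (ENNReal.ofReal (φ δ)) with hcdef
    have hc : 0 < c := by
      apply lt_min <;> rw [ENNReal.ofReal_pos] <;> positivity
    have hev := hmod.eventually_lt_const hc
    rw [eventually_atTop] at hev
    obtain ⟨N, hN⟩ := hev
    refine ⟨N, fun m hm => ?_⟩
    have hm' := hN m hm
    set s := sv (x m) with hsdef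
    -- every singular value is ≤ δ
    have hsmall : ∀ n, s n ≤ δ := by
      intro n
      have h1 : ENNReal.ofReal (φ (s n)) ≤ modular φ s := ENNReal.le_tsum n
      have h2 : ENNReal.ofReal (φ (s n)) < ENNReal.ofReal (φ δ) :=
        lt_of_le_of_lt h1 (hm'.trans_le (min_le_right _ _))
      have h3 : φ (s n) < φ δ := by
        rwa [ENNReal.ofReal_lt_ofReal_iff hφδ] at h2
      by_contra hcon
      push_neg at hcon
      exact absurd (hmono (le_of_lt hδpos) ((hδpos.le.trans hcon.le) : s n ∈ Set.Ici 0)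
        hcon.le) (not_le.mpr h3)
    set l : ℝ := 1 / 2 ^ j with hldef
    have hl : 0 < l := by positivity
    have hdiv : ∀ n, s n / l = 2 ^ j * s n := by
      intro n
      rw [hldef, div_div_eq_mul_div, div_one, mul_comm]
    have hmod1 : modular φ (fun n => s n / l) ≤ 1 := by
      have hterm : ∀ n, ENNReal.ofReal (φ (s n / l)) ≤
          ENNReal.ofReal (k ^ j) * ENNReal.ofReal (φ (s n)) := by
        intro n
        rw [← ENNReal.ofReal_mul hkj.le, hdiv n]
        exact ENNReal.ofReal_le_ofReal
          (delta2_iter hk0.le hδ2 j (s n) (sv_nonneg _ _) (hsmall n))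
      calc modular φ (fun n => s n / l)
          ≤ ∑' n, ENNReal.ofReal (k ^ j) * ENNReal.ofReal (φ (s n)) :=
            ENNReal.tsum_le_tsum hterm
        _ = ENNReal.ofReal (k ^ j) * modular φ s := ENNReal.tsum_mul_left
        _ ≤ ENNReal.ofReal (k ^ j) * ENNReal.ofReal (1 / k ^ j) := by
            exact mul_le_mul_right (le_of_lt (hm'.trans_le (min_le_left _ _))) _
        _ = 1 := by
            rw [← ENNReal.ofReal_mul hkj.le, mul_one_div_cancel hkj.ne',
              ENNReal.ofReal_one]
    have hle : eLux φ s ≤ ENNReal.ofReal l :=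
      iInf_le_of_le l (iInf_le_of_le hl (iInf_le _ hmod1))
    refine hle.trans ?_
    have : ENNReal.ofReal l = (2⁻¹ : ℝ≥0∞) ^ j := by
      rw [hldef, one_div, ← inv_pow, ENNReal.ofReal_pow (by positivity),
        ENNReal.ofReal_inv_of_pos two_pos, ENNReal.ofReal_ofNat]
    rw [this]
    exact hj.le
  · -- eLux → 0 implies modular → 0
    intro hlux
    rw [ENNReal.tendsto_atTop_zero]
    intro ε hε
    have hc : (0:ℝ≥0∞) < min ε 2⁻¹ := lt_min hε (by norm_num)
    have hev := hlux.eventually_lt_const hc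
    rw [eventually_atTop] at hev
    obtain ⟨N, hN⟩ := hev
    refine ⟨N, fun m hm => ?_⟩
    have hm' := hN m hm
    set s := sv (x m) with hsdef
    rw [eLux] at hm'
    simp only [iInf_lt_iff] at hm'
    obtain ⟨l, hl, hmod1, hlt⟩ := hm'
    have hl1 : l ≤ 1 := by
      by_contra h'
      push_neg at h'
      have h1 : (1:ℝ≥0∞) ≤ ENNReal.ofReal l := by
        simpa using ENNReal.ofReal_le_ofReal h'.le
      have h2 : ENNReal.ofReal l < 2⁻¹ := hlt.trans_le (min_le_right _ _)
      exact absurd (h1.trans_lt h2) (by norm_num)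
    have hterm : ∀ n, φ (s n) ≤ l * φ (s n / l) := by
      intro n
      have hx0 : s n / l ∈ Set.Ici (0:ℝ) := div_nonneg (sv_nonneg _ _) hl.le
      have hy0 : (0:ℝ) ∈ Set.Ici (0:ℝ) := Set.self_mem_Ici
      have := hconv.2 hx0 hy0 hl.le (by linarith : (0:ℝ) ≤ 1 - l) (by ring)
      simp only [smul_eq_mul, mul_zero, add_zero, hzero] at this
      rwa [mul_div_cancel₀ _ hl.ne'] at this
    calc modular φ s ≤ ∑' n, ENNReal.ofReal l * ENNReal.ofReal (φ (s n / l)) := by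
          refine ENNReal.tsum_le_tsum fun n => ?_
          rw [← ENNReal.ofReal_mul hl.le]
          exact ENNReal.ofReal_le_ofReal (hterm n)
      _ = ENNReal.ofReal l * modular φ (fun n => s n / l) := ENNReal.tsum_mul_left
      _ ≤ ENNReal.ofReal l * 1 := mul_le_mul_right hmod1 _
      _ ≤ ε := by
          rw [mul_one]
          exact le_of_lt (hlt.trans_le (min_le_left _ _))
end
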